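/- arXiv:1303.4783 — 3 statements merged into one kernel-verified Lean document; each statement's English description precedes it below -/
import Mathlib

section
/- If a block upper-triangular matrix (over the complex numbers) is diagonalizable, then each of its diagonal blocks is diagonalizable. -/
/-!
Over `ℂ` a matrix is diagonalizable exactly when some squarefree polynomial annihilates it
(such a polynomial makes the associated endomorphism semisimple, so its eigenvectors span).
A polynomial in a block upper-triangular matrix is again block upper-triangular, with the
polynomial applied to the blocks on the diagonal; hence a squarefree polynomial annihilating
the whole matrix annihilates both diagonal blocks.
-/

/-- A complex square matrix is diagonalizable if it is similar to a diagonal matrix. -/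
def IsDiagonalizable {n : Type*} [Fintype n] [DecidableEq n] (M : Matrix n n ℂ) : Prop :=
  ∃ P : Matrix n n ℂ, IsUnit P.det ∧ ∃ d : n → ℂ, P⁻¹ * M * P = Matrix.diagonal d

open Polynomial Matrix

namespace Matrix

variable {R m n : Type*} [CommRing R] [Fintype m] [DecidableEq m] [Fintype n] [DecidableEq n]

theorem exists_fromBlocks_zero₂₁_pow (A : Matrix m m R) (B : Matrix m n R) (C : Matrix n n R)
    (k : ℕ) : ∃ X, fromBlocks A B 0 C ^ k = fromBlocks (A ^ k) X 0 (C ^ k) := by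
  induction k with
  | zero => exact ⟨0, by simp [fromBlocks_one]⟩
  | succ k ih =>
    obtain ⟨X, hX⟩ := ih
    exact ⟨A ^ k * B + X * C, by simp [pow_succ, hX, fromBlocks_multiply]⟩

theorem exists_aeval_fromBlocks_zero₂₁ (A : Matrix m m R) (B : Matrix m n R) (C : Matrix n n R)
    (p : R[X]) : ∃ X, aeval (fromBlocks A B 0 C) p = fromBlocks (aeval A p) X 0 (aeval C p) := by
  induction p using Polynomial.induction_on' with
  | add p q hp hq =>
    obtain ⟨X, hX⟩ := hp
    obtain ⟨Y, hY⟩ := hq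
    exact ⟨X + Y, by simp [hX, hY, fromBlocks_add]⟩
  | monomial k c =>
    obtain ⟨X, hX⟩ := exists_fromBlocks_zero₂₁_pow A B C k
    exact ⟨c • X, by
      simp [aeval_monomial, hX, Algebra.algebraMap_eq_smul_one, fromBlocks_smul]⟩

theorem aeval_eq_zero_of_aeval_fromBlocks_zero₂₁_eq_zero {A : Matrix m m R} {B : Matrix m n R}
    {C : Matrix n n R} {p : R[X]} (h : aeval (fromBlocks A B 0 C) p = 0) :
    aeval A p = 0 ∧ aeval C p = 0 := by
  obtain ⟨X, hX⟩ := exists_aeval_fromBlocks_zero₂₁ A B C p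
  rw [h, ← fromBlocks_zero, eq_comm, fromBlocks_inj] at hX
  exact ⟨hX.1, hX.2.2.2⟩

theorem aeval_diagonal (d : n → R) (p : R[X]) :
    aeval (diagonal d) p = diagonal fun i ↦ p.eval (d i) := by
  rw [← diagonalAlgHom_apply R, aeval_algHom_apply, aeval_pi]
  simp

end Matrix

theorem Module.End.exists_basis_eigenvectors {K V : Type*} [Field K] [AddCommGroup V] [Module K V]
    {f : Module.End K V} (h : ⨆ μ, f.eigenspace μ = ⊤) :
    ∃ (s : Set V) (b : Module.Basis s K V), ∀ i, ∃ μ : K, f (b i) = μ • b i := by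
  obtain ⟨s, hs, hspan, hli⟩ := exists_linearIndependent K {v : V | ∃ μ : K, f v = μ • v}
  have htop : ⊤ ≤ Submodule.span K (Set.range ((↑) : s → V)) := by
    rw [Subtype.range_coe, hspan, ← h]
    exact iSup_le fun μ v hv ↦
      Submodule.subset_span ⟨μ, Module.End.mem_eigenspace_iff.mp hv⟩
  exact ⟨s, .mk hli htop, fun i ↦ by simpa using hs i.2⟩

section IsDiagonalizable

variable {n : Type*} [Fintype n] [DecidableEq n]

theorem isDiagonalizable_of_basis_of_mulVec_eq_smul {ι : Type*} (M : Matrix n n ℂ)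
    (b : Module.Basis ι ℂ (n → ℂ)) (hb : ∀ i, ∃ μ : ℂ, M *ᵥ b i = μ • b i) :
    IsDiagonalizable M := by
  let b' := b.reindex (b.indexEquiv (Pi.basisFun ℂ n))
  choose d hd using fun j ↦ hb ((b.indexEquiv (Pi.basisFun ℂ n)).symm j)
  let P := (Pi.basisFun ℂ n).toMatrix b'
  have hP : IsUnit P.det :=
    isUnit_det_of_right_inverse (Module.Basis.toMatrix_mul_toMatrix_flip _ _)
  have hMP : M * P = P * diagonal d := by
    ext i j
    rw [mul_apply, mul_diagonal]
    simpa [P, b', mul_comm, Module.Basis.toMatrix_apply, mulVec, dotProduct] using congrFun (hd j) i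
  refine ⟨P, hP, d, ?_⟩
  rw [mul_assoc, hMP, ← mul_assoc, nonsing_inv_mul P hP, one_mul]

theorem IsDiagonalizable.exists_squarefree_aeval_eq_zero {M : Matrix n n ℂ}
    (h : IsDiagonalizable M) : ∃ p : ℂ[X], Squarefree p ∧ aeval M p = 0 := by
  obtain ⟨P, hP, d, hPD⟩ := h
  let u : (Matrix n n ℂ)ˣ := ((isUnit_iff_isUnit_det P).mpr hP).unit
  -- conjugation by a unit is an algebra automorphism, so it commutes with `aeval`
  have hM : M = ConjAct.toConjAct u • diagonal d := by
    rw [ConjAct.units_smul_def, ConjAct.ofConjAct_toConjAct, coe_units_inv, IsUnit.unit_spec,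
      ← hPD]
    simp [mul_assoc, mul_nonsing_inv_cancel_left _ _ hP, mul_nonsing_inv _ hP]
  set p : ℂ[X] := ∏ c ∈ Finset.univ.image d, (X - C c)
  have hD : aeval (diagonal d) p = 0 := by
    rw [aeval_diagonal, diagonal_eq_zero]
    funext i
    simpa [p, eval_prod] using Finset.prod_eq_zero_iff.mpr ⟨d i, by simp, sub_self _⟩
  have hp : Squarefree p :=
    ((separable_prod_X_sub_C_iff' (f := id)).mpr fun _ _ _ _ ↦ id).squarefree
  refine ⟨p, hp, ?_⟩
  rw [hM, ← MulSemiringAction.toAlgEquiv_apply ℂ, aeval_algEquiv, AlgHom.comp_apply, hD,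
    map_zero]

theorem isDiagonalizable_of_squarefree_aeval_eq_zero {M : Matrix n n ℂ} {p : ℂ[X]}
    (hp : Squarefree p) (hM : aeval M p = 0) : IsDiagonalizable M := by
  have hss : Module.End.IsSemisimple (toLinAlgEquiv' M) :=
    Module.End.isSemisimple_of_squarefree_aeval_eq_zero hp (by simp [aeval_algEquiv, hM])
  obtain ⟨_, b, hb⟩ := Module.End.exists_basis_eigenvectors hss.iSup_eigenspace_eq_top
  exact isDiagonalizable_of_basis_of_mulVec_eq_smul M b (by simpa using hb)

theorem isDiagonalizable_iff_exists_squarefree_aeval_eq_zero {M : Matrix n n ℂ} :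
    IsDiagonalizable M ↔ ∃ p : ℂ[X], Squarefree p ∧ aeval M p = 0 :=
  ⟨IsDiagonalizable.exists_squarefree_aeval_eq_zero,
    fun ⟨_, hp, hM⟩ ↦ isDiagonalizable_of_squarefree_aeval_eq_zero hp hM⟩

end IsDiagonalizable

/-- If a block upper-triangular complex matrix is diagonalizable,
then each of its diagonal blocks is diagonalizable. -/
theorem diag_blocks_diagonalizable_of_blockTriangular_diagonalizable
    {m n : Type*} [Fintype m] [DecidableEq m] [Fintype n] [DecidableEq n]
    (A : Matrix m m ℂ) (B : Matrix m n ℂ) (C : Matrix n n ℂ)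
    (h : IsDiagonalizable (Matrix.fromBlocks A B 0 C)) :
    IsDiagonalizable A ∧ IsDiagonalizable C := by
  obtain ⟨p, hp, hM⟩ := isDiagonalizable_iff_exists_squarefree_aeval_eq_zero.mp h
  obtain ⟨hA, hC⟩ := aeval_eq_zero_of_aeval_fromBlocks_zero₂₁_eq_zero hM
  exact ⟨isDiagonalizable_iff_exists_squarefree_aeval_eq_zero.mpr ⟨p, hp, hA⟩,
    isDiagonalizable_iff_exists_squarefree_aeval_eq_zero.mpr ⟨p, hp, hC⟩⟩
end

section
/- Let g₁ > 0, ḡ₃ > 0, g₂, g₅ real with g₂ ≠ 0, g₂ < g₁, and g₂g₅ < g₁ - 2√(g₁ - g₂)·√ḡ₃ + ḡ₃. Then both roots v±² = ((g₁ + ḡ₃ - g₂g₅) ± √((g₁ + ḡ₃ - g₂g₅)² - 4(g₁ - g₂)ḡ₃))/2 are real and strictly positive. -/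
/-- Under the stated gauge parameter conditions both squared characteristic speeds
`v±² = (s ± √(s² - 4(g₁-g₂)ḡ₃))/2`, with `s = g₁ + ḡ₃ - g₂g₅`, are real
(the discriminant is nonnegative) and strictly positive. -/
theorem gauge_speeds_real_positive (g₁ g₂ g₃bar g₅ : ℝ)
    (hg₁ : 0 < g₁) (hg₃ : 0 < g₃bar) (hg₂ : g₂ ≠ 0) (hg₂₁ : g₂ < g₁)
    (hineq : g₂ * g₅ < g₁ - 2 * Real.sqrt (g₁ - g₂) * Real.sqrt g₃bar + g₃bar) :
    0 ≤ (g₁ + g₃bar - g₂ * g₅) ^ 2 - 4 * (g₁ - g₂) * g₃bar ∧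
    0 < ((g₁ + g₃bar - g₂ * g₅) +
        Real.sqrt ((g₁ + g₃bar - g₂ * g₅) ^ 2 - 4 * (g₁ - g₂) * g₃bar)) / 2 ∧
    0 < ((g₁ + g₃bar - g₂ * g₅) -
        Real.sqrt ((g₁ + g₃bar - g₂ * g₅) ^ 2 - 4 * (g₁ - g₂) * g₃bar)) / 2 := by
  set s := g₁ + g₃bar - g₂ * g₅ with hs
  have h12 : (0:ℝ) < g₁ - g₂ := by linarith
  set a := 2 * Real.sqrt (g₁ - g₂) * Real.sqrt g₃bar with ha
  have ha0 : 0 ≤ a := by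
    have := Real.sqrt_nonneg (g₁ - g₂)
    have := Real.sqrt_nonneg g₃bar
    positivity
  have hsa : a < s := by
    simp only [hs, ha]; linarith
  have ha2 : a ^ 2 = 4 * (g₁ - g₂) * g₃bar := by
    have h1 : Real.sqrt (g₁ - g₂) ^ 2 = g₁ - g₂ := Real.sq_sqrt h12.le
    have h2 : Real.sqrt g₃bar ^ 2 = g₃bar := Real.sq_sqrt hg₃.le
    rw [ha]; ring_nf; nlinarith
  have hD : (0:ℝ) ≤ s ^ 2 - 4 * (g₁ - g₂) * g₃bar := by
    rw [← ha2]
    nlinarith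
  have hs0 : 0 < s := lt_of_le_of_lt ha0 hsa
  have hDlt : s ^ 2 - 4 * (g₁ - g₂) * g₃bar < s ^ 2 := by nlinarith
  have hsq : Real.sqrt (s ^ 2 - 4 * (g₁ - g₂) * g₃bar) < s := by
    have := Real.sqrt_lt_sqrt hD hDlt
    rwa [Real.sqrt_sq hs0.le] at this
  have hsqnn := Real.sqrt_nonneg (s ^ 2 - 4 * (g₁ - g₂) * g₃bar)
  exact ⟨hD, by linarith, by linarith⟩
end

section
/- Let A be a square matrix over ℝ of the form [[0, I],[D, 0]] in n+n block form where D is symmetric positive definite. Then A is diagonalizable over ℝ with eigenvalues ±√μ for each eigenvalue μ of D. -/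
/-!
Diagonalize `D = U Λ Uᵀ` orthogonally and put `S = √Λ`, so that `D U = U S²`. For each column `u`
of `U` with eigenvalue `λ > 0`, the vectors `(u, ±√λ u)` are eigenvectors of `[[0, I], [D, 0]]`
with eigenvalues `±√λ`. Collected as columns they form `P = [[U, U], [U S, -U S]]`, whose Schur
complement with respect to `U` is `-2 U S`; since `S` is invertible, so is `P`.
-/

open Matrix

namespace Matrix

variable {n : Type*} [Fintype n] [DecidableEq n]

theorem IsHermitian.mul_eigenvectorUnitary {𝕜 : Type*} [RCLike 𝕜] {A : Matrix n n 𝕜}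
    (hA : A.IsHermitian) :
    A * (hA.eigenvectorUnitary : Matrix n n 𝕜) =
      (hA.eigenvectorUnitary : Matrix n n 𝕜) * diagonal (RCLike.ofReal ∘ hA.eigenvalues) := by
  simpa [mul_assoc] using
    congrArg (· * (hA.eigenvectorUnitary : Matrix n n 𝕜)) hA.spectral_theorem

theorem diagonal_sqrt_mul_self {d : n → ℝ} (hd : ∀ i, 0 ≤ d i) :
    diagonal (fun i ↦ √(d i)) * diagonal (fun i ↦ √(d i)) = diagonal d := by
  simp [diagonal_mul_diagonal, Real.mul_self_sqrt (hd _)]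

theorem isUnit_det_diagonal_sqrt {d : n → ℝ} (hd : ∀ i, 0 < d i) :
    IsUnit (diagonal (fun i ↦ √(d i))).det := by
  simpa [det_diagonal, Finset.prod_ne_zero_iff] using fun i ↦ (Real.sqrt_pos.2 (hd i)).ne'

theorem fromBlocks_zero_one_mul_fromBlocks {R : Type*} [Ring R] {D U S : Matrix n n R}
    (hDU : D * U = U * (S * S)) :
    fromBlocks 0 1 D 0 * fromBlocks U U (U * S) (-(U * S)) =
      fromBlocks U U (U * S) (-(U * S)) * fromBlocks S 0 0 (-S) := by
  simp [fromBlocks_multiply, hDU, mul_assoc]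

theorem isUnit_det_fromBlocks_mul_neg {K : Type*} [Field K] {U S : Matrix n n K}
    (hU : IsUnit U.det) (hS : IsUnit S.det) (h2 : (2 : K) ≠ 0) :
    IsUnit (fromBlocks U U (U * S) (-(U * S))).det := by
  have := U.invertibleOfIsUnitDet hU
  rw [det_fromBlocks₁₁, invOf_mul_cancel_right]
  have hSchur : -(U * S) - U * S = (-2 : K) • (U * S) := by module
  rw [hSchur, det_smul, det_mul]
  simp [hU.ne_zero, hS.ne_zero, h2]

theorem inv_mul_mul_eq_of_mul_eq_mul {R : Type*} [CommRing R] {A B P : Matrix n n R}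
    (hP : IsUnit P.det) (h : A * P = P * B) : P⁻¹ * A * P = B := by
  rw [mul_assoc, h, nonsing_inv_mul_cancel_left _ _ hP]

theorem spectrum_eq_of_mul_eq_mul {R : Type*} [CommRing R] {A B P : Matrix n n R}
    (hP : IsUnit P.det) (h : A * P = P * B) : spectrum R A = spectrum R B := by
  obtain ⟨u, rfl⟩ := (isUnit_iff_isUnit_det P).2 hP
  rw [← spectrum.units_conjugate' (u := u), mul_assoc, h, ← mul_assoc, Units.inv_mul, one_mul]

end Matrix

/-- The first-order wave symbol `[[0, I],[D, 0]]` with `D` real symmetric positive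
definite is diagonalizable over ℝ, and its spectrum consists exactly of `±√μ`
for the eigenvalues `μ` of `D`. -/
theorem wave_operator_symbol_diagonalizable
    {n : Type*} [Fintype n] [DecidableEq n]
    (D : Matrix n n ℝ) (hD : D.PosDef) :
    (∃ P : Matrix (n ⊕ n) (n ⊕ n) ℝ, IsUnit P.det ∧
      ∃ d : n ⊕ n → ℝ,
        P⁻¹ * Matrix.fromBlocks (0 : Matrix n n ℝ) (1 : Matrix n n ℝ) D (0 : Matrix n n ℝ) * P = Matrix.diagonal d) ∧
    spectrum ℝ (Matrix.fromBlocks (0 : Matrix n n ℝ) (1 : Matrix n n ℝ) D (0 : Matrix n n ℝ)) =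
      {x : ℝ | ∃ μ ∈ spectrum ℝ D, x = Real.sqrt μ ∨ x = -Real.sqrt μ} := by
  have hH := hD.isHermitian
  have hP := isUnit_det_fromBlocks_mul_neg (UnitaryGroup.det_isUnit hH.eigenvectorUnitary)
    (isUnit_det_diagonal_sqrt hD.eigenvalues_pos) two_ne_zero
  set U : Matrix n n ℝ := (hH.eigenvectorUnitary : Matrix n n ℝ)
  set S := diagonal fun i ↦ √(hH.eigenvalues i)
  have hDU : D * U = U * (S * S) := by
    rw [diagonal_sqrt_mul_self fun i ↦ (hD.eigenvalues_pos i).le]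
    exact hH.mul_eigenvectorUnitary
  set d : n ⊕ n → ℝ := Sum.elim (fun i ↦ √(hH.eigenvalues i)) fun i ↦ -√(hH.eigenvalues i)
  have hd : diagonal d = fromBlocks S 0 0 (-S) := by rw [← fromBlocks_diagonal, diagonal_neg]
  have hAP := hd ▸ fromBlocks_zero_one_mul_fromBlocks hDU
  refine ⟨⟨_, hP, d, inv_mul_mul_eq_of_mul_eq_mul hP hAP⟩, ?_⟩
  rw [spectrum_eq_of_mul_eq_mul hP hAP, spectrum_diagonal, Set.Sum.elim_range,
    hH.spectrum_real_eq_range_eigenvalues]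
  ext x
  simp [eq_comm, exists_or]
end
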